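/- If v, g, u, n, t are positive integers with v = g·t·u, and (1) the complete u-partite graph of type g^u admits a resolvable decomposition into copies of K_n with h = g(u-1)/(n-1) parallel classes, (2) for each triple (r1,s1,t1) in a set J1 the complete n-partite graph of type t^n admits a uniformly resolvable (P_2,P_3,P_4)-decomposition with r1 matchings, s1 P_3-classes, t1 P_4-classes, and (3) for each (r2,s2,t2) in a set J2 the complete graph K_{gt} admits such a decomposition, then for every (r,s,t) ∈ J2 + h * J1 the complete graph K_v admits a uniformly resolvable (P_2,P_3,P_4)-decomposition with the corresponding class counts. -/

import Mathlib

open Pointwise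

/-- The edges of a path given by the list of its vertices in order. -/
def pathEdges {V : Type*} [DecidableEq V] (l : List V) : Finset (Sym2 V) :=
  ((l.zip l.tail).map fun p => Sym2.mk p.1 p.2).toFinset

/-- A parallel class of paths on `k` vertices in a graph `G`: a set of lists, each
a path on `k` vertices of `G`, which are vertex-disjoint and cover every vertex. -/
def IsPathClass {V : Type*} (G : SimpleGraph V) (k : ℕ) (C : Finset (List V)) : Prop :=
  (∀ l ∈ C, l.length = k ∧ l.Nodup ∧ l.Chain' G.Adj) ∧
  ∀ x : V, ∃! l : List V, l ∈ C ∧ x ∈ l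

/-- All edges used by a class of paths. -/
def classEdges {V : Type*} [DecidableEq V] (C : Finset (List V)) : Finset (Sym2 V) :=
  C.biUnion pathEdges

/-- A uniformly resolvable `(P₂,P₃,P₄)`-decomposition of `G` into `r` perfect matchings
(parallel classes of `P₂`), `s` parallel classes of `P₃` and `t` parallel classes of `P₄`:
pairwise edge-disjoint classes whose edges together are exactly the edges of `G`. -/
def IsURD {V : Type*} [DecidableEq V] (G : SimpleGraph V) (r s t : ℕ) : Prop :=
  ∃ F : Fin r ⊕ Fin s ⊕ Fin t → Finset (List V),
    (∀ i, IsPathClass G (Sum.elim (fun _ => 2) (Sum.elim (fun _ => 3) (fun _ => 4)) i) (F i)) ∧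
    (∀ i j, i ≠ j → Disjoint (classEdges (F i)) (classEdges (F j))) ∧
    (∀ e, e ∈ G.edgeSet ↔ ∃ i, e ∈ classEdges (F i))

/-- A parallel class of copies of `K_n` in `G`: a set of `n`-element blocks, each
inducing a clique of `G`, which are pairwise disjoint and cover every vertex. -/
def IsCliqueClass {V : Type*} (G : SimpleGraph V) (n : ℕ) (C : Finset (Finset V)) : Prop :=
  (∀ b ∈ C, b.card = n ∧ ∀ x ∈ b, ∀ y ∈ b, x ≠ y → G.Adj x y) ∧
  ∀ x : V, ∃! b : Finset V, b ∈ C ∧ x ∈ b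

/-- All edges covered by a class of cliques. -/
def cliqueEdges {V : Type*} [DecidableEq V] (C : Finset (Finset V)) : Finset (Sym2 V) :=
  C.biUnion fun b => b.sym2.filter fun e => ¬ e.IsDiag

/-- The complete multipartite graph with `u` parts each of size `g`. -/
def multipartiteG (u g : ℕ) : SimpleGraph (Fin u × Fin g) :=
  SimpleGraph.comap Prod.fst ⊤

/-- `foldSum h X` is the `h`-fold sumset `h * X`: all sums of `h` elements of `X`
(with repetition allowed); by convention `foldSum 0 X = {0}`. -/
def foldSum {α : Type*} [AddMonoid α] : ℕ → Set α → Set α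
  | 0, _ => {0}
  | n + 1, X => foldSum n X + X

/-!
Take `(Fin u × Fin g) × Fin t` as the vertex set of `K_v`: each point of the RGDD is expanded
`t` times. Two vertices whose points lie in the same group are joined in one of `u`
vertex-disjoint copies of `K_{gt}`; two vertices whose points lie in different groups are
joined inside the expansion of the unique block containing both points, a copy of the complete
`n`-partite graph of type `t^n`. Decompositions of vertex-disjoint graphs with equal class
counts merge class by class, so the group fillings give `J₂` and each of the `h` resolution
classes of blocks gives one summand of `J₁`; edge-disjoint graphs then add their class counts.
-/

section PathClasses

variable {V W : Type*}

lemma existsUnique_mem_image_map [DecidableEq W] {f : V → W} (hf : f.Injective)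
    {C : Finset (List V)} {x : V} (h : ∃! l, l ∈ C ∧ x ∈ l) :
    ∃! l, l ∈ C.image (List.map f) ∧ f x ∈ l := by
  obtain ⟨l, ⟨hlC, hxl⟩, hl⟩ := h
  refine ⟨l.map f, ⟨Finset.mem_image_of_mem _ hlC, List.mem_map_of_mem hxl⟩, ?_⟩
  rintro _ ⟨hl', hxl'⟩
  obtain ⟨l', hl'C, rfl⟩ := Finset.mem_image.1 hl'
  rw [List.mem_map_of_injective hf] at hxl'
  rw [hl l' ⟨hl'C, hxl'⟩]

variable [DecidableEq V] [DecidableEq W]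

lemma pathEdges_map (f : V → W) (l : List V) :
    pathEdges (l.map f) = (pathEdges l).image (Sym2.map f) := by
  ext e
  simp only [pathEdges, ← List.map_tail, List.zip_map, List.map_map, List.mem_toFinset,
    List.mem_map, Finset.mem_image, Function.comp_apply, Prod.map_fst, Prod.map_snd,
    exists_exists_and_eq_and, Sym2.map_mk]

lemma classEdges_image (f : V → W) (C : Finset (List V)) :
    classEdges (C.image (List.map f)) = (classEdges C).image (Sym2.map f) := by
  simp only [classEdges, Finset.image_biUnion, Finset.biUnion_image, pathEdges_map]

lemma classEdges_biUnion {β : Type*} (s : Finset β) (F : β → Finset (List V)) :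
    classEdges (s.biUnion F) = s.biUnion fun b => classEdges (F b) := by
  simp only [classEdges, Finset.biUnion_biUnion]

lemma isPathClass_biUnion_image_val {β : Type*} [Fintype β] {G : SimpleGraph V}
    {S : β → Set V} (hS : ∀ x, ∃! b, x ∈ S b) {k : ℕ}
    {C : (b : β) → Finset (List (S b))} (h : ∀ b, IsPathClass (G.induce (S b)) k (C b)) :
    IsPathClass G k (Finset.univ.biUnion fun b => (C b).image (List.map Subtype.val)) := by
  refine ⟨fun l hl => ?_, fun x => ?_⟩
  · obtain ⟨b, -, hlb⟩ := Finset.mem_biUnion.1 hl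
    obtain ⟨l, hlC, rfl⟩ := Finset.mem_image.1 hlb
    obtain ⟨hlen, hnd, hch⟩ := (h b).1 l hlC
    exact ⟨(List.length_map _).trans hlen, hnd.map Subtype.val_injective,
      (List.isChain_map _).2 hch⟩
  · obtain ⟨b, hb, -⟩ := hS x
    obtain ⟨l, ⟨hl, hxl⟩, huniq⟩ :=
      existsUnique_mem_image_map Subtype.val_injective ((h b).2 ⟨x, hb⟩)
    refine ⟨l, ⟨Finset.mem_biUnion.2 ⟨b, Finset.mem_univ _, hl⟩, hxl⟩, ?_⟩
    rintro l' ⟨hl', hxl'⟩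
    obtain ⟨b', -, hl'b'⟩ := Finset.mem_biUnion.1 hl'
    have hb' : x ∈ S b' := by
      obtain ⟨l₀, -, rfl⟩ := Finset.mem_image.1 hl'b'
      obtain ⟨y, -, rfl⟩ := List.mem_map.1 hxl'
      exact y.2
    obtain rfl := (hS x).unique hb hb'
    exact huniq l' ⟨hl'b', hxl'⟩

end PathClasses

def IsPathDecomposition {V ι : Type*} [DecidableEq V] (G : SimpleGraph V) (κ : ι → ℕ)
    (F : ι → Finset (List V)) : Prop :=
  (∀ i, IsPathClass G (κ i) (F i)) ∧
  (∀ i j, i ≠ j → Disjoint (classEdges (F i)) (classEdges (F j))) ∧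
  (∀ e, e ∈ G.edgeSet ↔ ∃ i, e ∈ classEdges (F i))

def urdKind (r s t : ℕ) : Fin r ⊕ Fin s ⊕ Fin t → ℕ :=
  Sum.elim (fun _ => 2) (Sum.elim (fun _ => 3) (fun _ => 4))

lemma isURD_iff {V : Type*} [DecidableEq V] {G : SimpleGraph V} {r s t : ℕ} :
    IsURD G r s t ↔ ∃ F, IsPathDecomposition G (urdKind r s t) F :=
  Iff.rfl

namespace IsPathDecomposition

variable {V W ι ι' : Type*} [DecidableEq V] [DecidableEq W] {G : SimpleGraph V}
  {κ : ι → ℕ} {F : ι → Finset (List V)}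

lemma mem_edgeSet (h : IsPathDecomposition G κ F) {i : ι} {e : Sym2 V}
    (he : e ∈ classEdges (F i)) : e ∈ G.edgeSet :=
  (h.2.2 e).2 ⟨i, he⟩

lemma reindex (h : IsPathDecomposition G κ F) (σ : ι' ≃ ι) :
    IsPathDecomposition G (κ ∘ σ) (F ∘ σ) :=
  ⟨fun i => h.1 (σ i), fun _ _ hij => h.2.1 _ _ (σ.injective.ne hij),
    fun e => (h.2.2 e).trans σ.surjective.exists⟩

lemma sup {G' : SimpleGraph V} {κ' : ι' → ℕ} {F' : ι' → Finset (List V)}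
    (h : IsPathDecomposition G κ F) (h' : IsPathDecomposition G' κ' F')
    (hd : Disjoint G G') :
    IsPathDecomposition (G ⊔ G') (Sum.elim κ κ') (Sum.elim F F') := by
  have hd' := SimpleGraph.disjoint_edgeSet.2 hd
  refine ⟨?_, ?_, fun e => ?_⟩
  · rintro (i | i)
    · exact ⟨fun l hl => ((h.1 i).1 l hl).imp_right (And.imp_right
        (List.IsChain.imp fun _ _ => Or.inl)), (h.1 i).2⟩
    · exact ⟨fun l hl => ((h'.1 i).1 l hl).imp_right (And.imp_right
        (List.IsChain.imp fun _ _ => Or.inr)), (h'.1 i).2⟩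
  · rintro (i | i) (j | j) hij
    · exact h.2.1 i j (ne_of_apply_ne _ hij)
    · exact Finset.disjoint_left.2 fun e hi hj =>
        Set.disjoint_left.1 hd' (h.mem_edgeSet hi) (h'.mem_edgeSet hj)
    · exact Finset.disjoint_left.2 fun e hi hj =>
        Set.disjoint_left.1 hd' (h.mem_edgeSet hj) (h'.mem_edgeSet hi)
    · exact h'.2.1 i j (ne_of_apply_ne _ hij)
  · rw [SimpleGraph.edgeSet_sup, Set.mem_union, h.2.2, h'.2.2, Sum.exists]
    rfl

lemma map_iso {G' : SimpleGraph W} (h : IsPathDecomposition G κ F) (φ : G ≃g G') :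
    IsPathDecomposition G' κ fun i => (F i).image (List.map φ) := by
  refine ⟨fun i => ⟨fun l hl => ?_, fun x => ?_⟩, fun i j hij => ?_, fun e => ?_⟩
  · obtain ⟨l, hlF, rfl⟩ := Finset.mem_image.1 hl
    obtain ⟨hlen, hnd, hch⟩ := (h.1 i).1 l hlF
    exact ⟨(List.length_map _).trans hlen, hnd.map φ.injective,
      (List.isChain_map _).2 (hch.imp fun _ _ => φ.map_adj_iff.2)⟩
  · simpa using existsUnique_mem_image_map φ.injective ((h.1 i).2 (φ.symm x))
  · rw [classEdges_image, classEdges_image]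
    exact (Finset.disjoint_image (Sym2.map.injective φ.injective)).2 (h.2.1 i j hij)
  · obtain ⟨e, rfl⟩ : ∃ e₀, Sym2.map φ e₀ = e :=
      ⟨Sym2.map φ.symm e, by simp [Sym2.map_map]⟩
    simp only [φ.map_mem_edgeSet_iff, h.2.2, classEdges_image,
      (Sym2.map.injective φ.injective).mem_finset_image]

lemma of_induce {β : Type*} [Fintype β] {S : β → Set V}
    {F : (b : β) → ι → Finset (List (S b))} (hS : ∀ x, ∃! b, x ∈ S b)
    (hG : ∀ x y, G.Adj x y → ∃ b, x ∈ S b ∧ y ∈ S b)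
    (h : ∀ b, IsPathDecomposition (G.induce (S b)) κ (F b)) :
    IsPathDecomposition G κ fun i =>
      Finset.univ.biUnion fun b => (F b i).image (List.map Subtype.val) := by
  have hE : ∀ i e, e ∈ classEdges (Finset.univ.biUnion fun b =>
      (F b i).image (List.map Subtype.val)) ↔
      ∃ b, ∃ e₀ ∈ classEdges (F b i), Sym2.map Subtype.val e₀ = e := by
    simp [classEdges_biUnion, classEdges_image]
  refine ⟨fun i => isPathClass_biUnion_image_val hS fun b => (h b).1 i,
    fun i j hij => Finset.disjoint_left.2 fun e hei hej => ?_, fun e => ?_⟩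
  · obtain ⟨b, e₁, he₁, rfl⟩ := (hE i e).1 hei
    obtain ⟨b', e₂, he₂, he⟩ := (hE j _).1 hej
    have hb' : (e₁.out.1 : V) ∈ S b' := by
      have hmem : (e₁.out.1 : V) ∈ Sym2.map Subtype.val e₂ :=
        he ▸ Sym2.mem_map.2 ⟨_, e₁.out_fst_mem, rfl⟩
      obtain ⟨y, -, hy⟩ := Sym2.mem_map.1 hmem
      exact hy ▸ y.2
    obtain rfl := (hS _).unique e₁.out.1.2 hb'
    obtain rfl := Sym2.map.injective Subtype.val_injective he
    exact Finset.disjoint_left.1 ((h b).2.1 i j hij) he₁ he₂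
  · simp only [hE]
    constructor
    · induction e using Sym2.ind with
      | _ x y =>
        intro hxy
        obtain ⟨b, hx, hy⟩ := hG x y hxy
        obtain ⟨i, hi⟩ := ((h b).2.2 s(⟨x, hx⟩, ⟨y, hy⟩)).1 hxy
        exact ⟨i, b, _, hi, rfl⟩
    · rintro ⟨i, b, e₀, he₀, rfl⟩
      exact (SimpleGraph.Embedding.induce (S b)).toHom.map_mem_edgeSet ((h b).mem_edgeSet he₀)

end IsPathDecomposition

def urdIndexSumEquiv (r₁ s₁ t₁ r₂ s₂ t₂ : ℕ) :
    Fin (r₁ + r₂) ⊕ Fin (s₁ + s₂) ⊕ Fin (t₁ + t₂) ≃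
      (Fin r₁ ⊕ Fin s₁ ⊕ Fin t₁) ⊕ (Fin r₂ ⊕ Fin s₂ ⊕ Fin t₂) :=
  (finSumFinEquiv.symm.sumCongr (finSumFinEquiv.symm.sumCongr finSumFinEquiv.symm)).trans
    (((Equiv.refl _).sumCongr (Equiv.sumSumSumComm _ _ _ _)).trans (Equiv.sumSumSumComm _ _ _ _))

lemma urdKind_comp_urdIndexSumEquiv (r₁ s₁ t₁ r₂ s₂ t₂ : ℕ) :
    Sum.elim (urdKind r₁ s₁ t₁) (urdKind r₂ s₂ t₂) ∘ urdIndexSumEquiv r₁ s₁ t₁ r₂ s₂ t₂ =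
      urdKind (r₁ + r₂) (s₁ + s₂) (t₁ + t₂) := by
  funext i
  rcases i with i | i | i <;> induction i using Fin.addCases <;>
    simp [urdIndexSumEquiv, urdKind]

namespace IsURD

variable {V W : Type*} [DecidableEq V] [DecidableEq W] {G G' : SimpleGraph V} {r s t : ℕ}

lemma sup {r' s' t' : ℕ} (h : IsURD G r s t) (h' : IsURD G' r' s' t') (hd : Disjoint G G') :
    IsURD (G ⊔ G') (r + r') (s + s') (t + t') := by
  obtain ⟨F, hF⟩ := isURD_iff.1 h
  obtain ⟨F', hF'⟩ := isURD_iff.1 h'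
  have := (hF.sup hF' hd).reindex (urdIndexSumEquiv r s t r' s' t')
  rw [urdKind_comp_urdIndexSumEquiv] at this
  exact ⟨_, this⟩

lemma of_iso {H : SimpleGraph W} (h : IsURD G r s t) (φ : G ≃g H) : IsURD H r s t :=
  let ⟨_, hF⟩ := isURD_iff.1 h
  ⟨_, hF.map_iso φ⟩

lemma top_of_card_eq {α β : Type*} [DecidableEq α] [DecidableEq β] [Finite α] [Finite β]
    (h : IsURD (⊤ : SimpleGraph α) r s t) (hc : Nat.card α = Nat.card β) :
    IsURD (⊤ : SimpleGraph β) r s t :=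
  h.of_iso (.completeGraph (Finite.card_eq.1 hc).some)

lemma of_induce {β : Type*} [Finite β] {S : β → Set V} (hS : ∀ x, ∃! b, x ∈ S b)
    (hG : ∀ x y, G.Adj x y → ∃ b, x ∈ S b ∧ y ∈ S b)
    (h : ∀ b, IsURD (G.induce (S b)) r s t) : IsURD G r s t := by
  have := Fintype.ofFinite β
  choose F hF using h
  exact ⟨_, IsPathDecomposition.of_induce hS hG hF⟩

end IsURD

lemma isURD_bot {V : Type*} [DecidableEq V] : IsURD (⊥ : SimpleGraph V) 0 0 0 :=
  ⟨fun _ => ∅, fun i => by rcases i with ⟨_, ⟨⟩⟩ | ⟨_, ⟨⟩⟩ | ⟨_, ⟨⟩⟩,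
    fun i => by rcases i with ⟨_, ⟨⟩⟩ | ⟨_, ⟨⟩⟩ | ⟨_, ⟨⟩⟩,
    fun e => by simp [classEdges]⟩

lemma isURD_finset_sup {V ι : Type*} [DecidableEq V] {G : ι → SimpleGraph V}
    {p : ι → ℕ × ℕ × ℕ} (S : Finset ι) (hd : (S : Set ι).PairwiseDisjoint G)
    (h : ∀ i ∈ S, IsURD (G i) (p i).1 (p i).2.1 (p i).2.2) :
    IsURD (S.sup G) (∑ i ∈ S, p i).1 (∑ i ∈ S, p i).2.1 (∑ i ∈ S, p i).2.2 := by
  induction S using Finset.cons_induction with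
  | empty => exact isURD_bot
  | cons a S ha ih =>
    rw [Finset.sup_cons, Finset.sum_cons]
    refine (h a (Finset.mem_cons_self a S)).sup
      (ih (hd.subset (by simp)) fun i hi => h i (Finset.mem_cons_of_mem hi)) ?_
    refine Finset.disjoint_sup_right.2 fun i hi => hd (by simp) (by simp [hi]) ?_
    exact fun hai => ha (hai ▸ hi)

lemma exists_eq_sum_of_mem_foldSum {α : Type*} [AddCommMonoid α] {X : Set α} :
    ∀ {h : ℕ} {x : α}, x ∈ foldSum h X → ∃ q : Fin h → α, (∀ i, q i ∈ X) ∧ ∑ i, q i = x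
  | 0, x, hx => ⟨Fin.elim0, fun i => i.elim0, by simpa [foldSum, eq_comm] using hx⟩
  | _ + 1, _, hx => by
    obtain ⟨y, hy, z, hz, rfl⟩ := Set.mem_add.1 hx
    obtain ⟨q, hq, rfl⟩ := exists_eq_sum_of_mem_foldSum hy
    refine ⟨Fin.snoc q z, Fin.lastCases (by simpa using hz) fun i => by simpa using hq i, ?_⟩
    simp [Fin.sum_univ_castSucc]

namespace SimpleGraph

variable {V W ι : Type*}

lemma comap_iSup (f : V → W) (H : ι → SimpleGraph W) :
    (⨆ i, H i).comap f = ⨆ i, (H i).comap f := by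
  ext
  simp [iSup_adj]

lemma disjoint_comap {H H' : SimpleGraph W} (hd : Disjoint H H') (f : V → W) :
    Disjoint (H.comap f) (H'.comap f) :=
  disjoint_left.2 fun _ _ => disjoint_left.1 hd _ _

lemma disjoint_fromEdgeSet_of_disjoint {s s' : Set (Sym2 V)} (hd : Disjoint s s') :
    Disjoint (fromEdgeSet s) (fromEdgeSet s') := by
  rw [fromEdgeSet_disjoint, edgeSet_fromEdgeSet]
  exact hd.mono_right Set.sdiff_subset

lemma eq_iSup_fromEdgeSet {G : SimpleGraph V} {E : ι → Set (Sym2 V)}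
    (h : ∀ e, e ∈ G.edgeSet ↔ ∃ i, e ∈ E i) : G = ⨆ i, fromEdgeSet (E i) := by
  rw [← fromEdgeSet_iUnion, ← fromEdgeSet_edgeSet G]
  congr 1
  ext e
  simp [h]

end SimpleGraph

lemma mk_mem_cliqueEdges_iff {α : Type*} [DecidableEq α] {C : Finset (Finset α)} {a b : α} :
    s(a, b) ∈ cliqueEdges C ↔ ∃ B ∈ C, a ∈ B ∧ b ∈ B ∧ a ≠ b := by
  simp [cliqueEdges, and_assoc]

lemma natCard_fiber_fst_fst (u g t : ℕ) (b : Fin u) :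
    Nat.card {x : (Fin u × Fin g) × Fin t // x.1.1 = b} = g * t := by
  rw [Nat.card_congr (Equiv.prodSubtypeFstEquivSubtypeProd (p := fun a : Fin u × Fin g =>
    a.1 = b)), Nat.card_prod, Nat.card_congr (Equiv.prodSubtypeFstEquivSubtypeProd (p := (· = b)))]
  simp

lemma isURD_compl_comap_top {W β : Type*} [DecidableEq W] [Finite W] [Finite β] (f : W → β)
    {m : ℕ} (hf : ∀ b, Nat.card {x // f x = b} = m) {r s t : ℕ}
    (h : IsURD (⊤ : SimpleGraph (Fin m)) r s t) :
    IsURD ((⊤ : SimpleGraph β).comap f)ᶜ r s t := by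
  refine IsURD.of_induce (S := fun b => {x | f x = b})
    (fun x => ⟨f x, rfl, fun _ hb => hb.symm⟩) (fun x y hxy => ⟨f x, rfl, ?_⟩) fun b => ?_
  · simpa [eq_comm] using hxy.2
  · have hfiber : ((⊤ : SimpleGraph β).comap f)ᶜ.induce {x | f x = b} = ⊤ := by
      ext ⟨x, hx⟩ ⟨y, hy⟩
      simp [show f x = f y from hx.trans hy.symm]
    rw [hfiber]
    exact h.top_of_card_eq ((Nat.card_fin m).trans (hf b).symm)

noncomputable def blockIso {α : Type*} [DecidableEq α] {C : Finset (Finset α)} {n : ℕ}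
    (k : ℕ) {B : Finset α} (hBC : B ∈ C) (hB : B.card = n) :
    ((SimpleGraph.fromEdgeSet (cliqueEdges C : Set (Sym2 α))).comap
      (Prod.fst : α × Fin k → α)).induce {x | x.1 ∈ B} ≃g multipartiteG n k where
  toEquiv := Equiv.prodSubtypeFstEquivSubtypeProd.trans
    ((B.equivFinOfCardEq hB).prodCongr (Equiv.refl _))
  map_rel_iff' {x y} := by
    obtain ⟨⟨a, i⟩, ha⟩ := x
    obtain ⟨⟨b, j⟩, hb⟩ := y
    change B.equivFinOfCardEq hB ⟨a, ha⟩ ≠ B.equivFinOfCardEq hB ⟨b, hb⟩ ↔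
      s(a, b) ∈ cliqueEdges C ∧ a ≠ b
    rw [(B.equivFinOfCardEq hB).injective.ne_iff, Ne, Subtype.mk.injEq]
    exact ⟨fun hab => ⟨mk_mem_cliqueEdges_iff.2 ⟨B, hBC, ha, hb, hab⟩, hab⟩, And.right⟩

lemma isURD_comap_fst_fromEdgeSet_cliqueEdges {α : Type*} [DecidableEq α]
    {C : Finset (Finset α)} {n k r s t : ℕ} (hcard : ∀ B ∈ C, B.card = n)
    (hcover : ∀ a, ∃! B, B ∈ C ∧ a ∈ B) (h : IsURD (multipartiteG n k) r s t) :
    IsURD ((SimpleGraph.fromEdgeSet (cliqueEdges C : Set (Sym2 α))).comap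
      (Prod.fst : α × Fin k → α)) r s t := by
  refine IsURD.of_induce (S := fun B : C => {x | x.1 ∈ (B : Finset α)}) (fun x => ?_)
    (fun x y hxy => ?_) fun B => h.of_iso (blockIso k B.2 (hcard B B.2)).symm
  · obtain ⟨B, ⟨hB, hxB⟩, huniq⟩ := hcover x.1
    exact ⟨⟨B, hB⟩, hxB, fun B' hB' => Subtype.ext (huniq B' ⟨B'.2, hB'⟩)⟩
  · obtain ⟨B, hB, hx, hy, -⟩ := mk_mem_cliqueEdges_iff.1 hxy.1
    exact ⟨⟨B, hB⟩, hx, hy⟩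

theorem stmt17_general (v g u n t h : ℕ) (hv : v = g * t * u)
    (J1 J2 : Set (ℕ × ℕ × ℕ))
    (hRGDD : ∃ K : Fin h → Finset (Finset (Fin u × Fin g)),
      (∀ i, IsCliqueClass (multipartiteG u g) n (K i)) ∧
      (∀ i j, i ≠ j → Disjoint (cliqueEdges (K i)) (cliqueEdges (K j))) ∧
      (∀ e, e ∈ (multipartiteG u g).edgeSet ↔ ∃ i, e ∈ cliqueEdges (K i)))
    (hJ1 : ∀ p ∈ J1, IsURD (multipartiteG n t) p.1 p.2.1 p.2.2)
    (hJ2 : ∀ p ∈ J2, IsURD (⊤ : SimpleGraph (Fin (g * t))) p.1 p.2.1 p.2.2) :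
    ∀ p ∈ J2 + foldSum h J1, IsURD (⊤ : SimpleGraph (Fin v)) p.1 p.2.1 p.2.2 := by
  classical
  rintro _ ⟨p, hp, _, hq, rfl⟩
  obtain ⟨q, hqJ1, rfl⟩ := exists_eq_sum_of_mem_foldSum hq
  obtain ⟨K, hK, hKdisj, hKcover⟩ := hRGDD
  let M : SimpleGraph ((Fin u × Fin g) × Fin t) := (multipartiteG u g).comap Prod.fst
  have hgroups : IsURD Mᶜ p.1 p.2.1 p.2.2 :=
    isURD_compl_comap_top (fun x : (Fin u × Fin g) × Fin t => x.1.1)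
      (natCard_fiber_fst_fst u g t) (hJ2 p hp)
  have hblocks : IsURD M (∑ i, q i).1 (∑ i, q i).2.1 (∑ i, q i).2.2 := by
    rw [show M = Finset.univ.sup fun i =>
        (SimpleGraph.fromEdgeSet (cliqueEdges (K i) : Set (Sym2 _))).comap Prod.fst by
      rw [Finset.sup_univ_eq_iSup, ← SimpleGraph.comap_iSup,
        ← SimpleGraph.eq_iSup_fromEdgeSet hKcover]]
    refine isURD_finset_sup _ (fun i _ j _ hij => ?_) fun i _ => ?_
    · exact SimpleGraph.disjoint_comap
        (SimpleGraph.disjoint_fromEdgeSet_of_disjoint (Finset.disjoint_coe.2 (hKdisj i j hij))) _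
    · exact isURD_comap_fst_fromEdgeSet_cliqueEdges (fun B hB => ((hK i).1 B hB).1) (hK i).2
        (hJ1 _ (hqJ1 i))
  have hall := hgroups.sup hblocks disjoint_compl_left
  rw [compl_sup_eq_top] at hall
  exact hall.top_of_card_eq (by simp [hv]; ring)

/-- Theorem 3.3 (the RGDD filling construction).  Suppose `v = g·t·u` and
(1) the complete multipartite graph of type `g^u` has a resolvable decomposition into
copies of `K_n` whose blocks split into `h = g(u-1)/(n-1)` parallel classes,
(2) for each `(r₁,s₁,t₁) ∈ J₁` the complete multipartite graph of type `t^n` has a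
uniformly resolvable `(P₂,P₃,P₄)`-decomposition with those class numbers, and
(3) for each `(r₂,s₂,t₂) ∈ J₂` the complete graph `K_{gt}` has one as well.
Then for each `(r,s,t) ∈ J₂ + h * J₁`, `K_v` has a uniformly resolvable
`(P₂,P₃,P₄)`-decomposition with `r` matchings, `s` `P₃`-classes and `t` `P₄`-classes. -/
theorem stmt17 (v g u n t h : ℕ) (hv0 : 0 < v) (hg : 0 < g) (hu : 0 < u) (hn : 0 < n)
    (ht : 0 < t) (hv : v = g * t * u) (hh : h = g * (u - 1) / (n - 1))
    (J1 J2 : Set (ℕ × ℕ × ℕ))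
    (hRGDD : ∃ K : Fin h → Finset (Finset (Fin u × Fin g)),
      (∀ i, IsCliqueClass (multipartiteG u g) n (K i)) ∧
      (∀ i j, i ≠ j → Disjoint (cliqueEdges (K i)) (cliqueEdges (K j))) ∧
      (∀ e, e ∈ (multipartiteG u g).edgeSet ↔ ∃ i, e ∈ cliqueEdges (K i)))
    (hJ1 : ∀ p ∈ J1, IsURD (multipartiteG n t) p.1 p.2.1 p.2.2)
    (hJ2 : ∀ p ∈ J2, IsURD (⊤ : SimpleGraph (Fin (g * t))) p.1 p.2.1 p.2.2) :
    ∀ p ∈ J2 + foldSum h J1, IsURD (⊤ : SimpleGraph (Fin v)) p.1 p.2.1 p.2.2 :=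
  stmt17_general v g u n t h hv J1 J2 hRGDD hJ1 hJ2
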